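/- Let s ∈ ℝ, p ∈ (0,∞), q ∈ (p,∞), τ ∈ (0, 1/p - 1/q]. Define t = {t_Q} by t_Q = |R_j|^{s/n + 1/2 + τ - 1/p} when Q = R_j := [0,2^{-j})^n for some j ∈ ℤ, and t_Q = 0 otherwise. Then the Besov-type sequence norm ‖t‖_{ḃ^{s,τ}_{p,q}} is finite (in fact bounded by a constant depending only on n, p, q, τ), while ‖t‖_{ḃ^{s,τ+1/q-1/p}_{q,q}} = ∞. Hence ḃ^{s,τ+1/q-1/p}_{q,q}(ℝⁿ) is a proper subspace of ḃ^{s,τ}_{p,q}(ℝⁿ). -/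

import Mathlib

open MeasureTheory ENNReal

/-- A dyadic cube `Q_{jk} = 2^{-j}([0,1)^n + k)` in `ℝⁿ`, recorded by its
generation `j ∈ ℤ` and position `k ∈ ℤⁿ`. -/
structure DyadicCube (n : ℕ) where
  j : ℤ
  k : Fin n → ℤ

namespace DyadicCube

/-- The dyadic cube as a subset of `ℝⁿ`. -/
def toSet {n : ℕ} (Q : DyadicCube n) : Set (Fin n → ℝ) :=
  {x | ∀ i, (Q.k i : ℝ) * (2 : ℝ) ^ (-Q.j) ≤ x i ∧
        x i < ((Q.k i : ℝ) + 1) * (2 : ℝ) ^ (-Q.j)}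

/-- The Lebesgue measure `|Q| = 2^{-jn}` of a dyadic cube, as an element of `ℝ≥0∞`. -/
noncomputable def vol {n : ℕ} (Q : DyadicCube n) : ℝ≥0∞ :=
  (2 : ℝ≥0∞) ^ (-(Q.j : ℝ) * n)

/-- The characteristic function `χ_Q`, with values in `ℝ≥0∞`. -/
noncomputable def ind {n : ℕ} (Q : DyadicCube n) (x : Fin n → ℝ) : ℝ≥0∞ :=
  Q.toSet.indicator (fun _ => (1 : ℝ≥0∞)) x

end DyadicCube

open DyadicCube

/-- The coefficient `|Q|^{-s/n - 1/2}`. -/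
noncomputable def coeff {n : ℕ} (s : ℝ) (Q : DyadicCube n) : ℝ≥0∞ :=
  Q.vol ^ (-(s / (n : ℝ)) - 1 / 2)

/-- The `ℓ^q`-norm `(Σ_i a_i^q)^{1/q}` of a family of extended nonnegative reals,
with the usual modification (`sup`) when `q = ∞`. -/
noncomputable def lqSum {ι : Type*} (q : ℝ≥0∞) (a : ι → ℝ≥0∞) : ℝ≥0∞ :=
  if q = ∞ then ⨆ i, a i else (∑' i, a i ^ q.toReal) ^ (1 / q.toReal)

/-- The `L^p`-norm `(∫_A g^p dx)^{1/p}` over a set `A ⊆ ℝⁿ`, with the usual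
modification (`sup` over `x ∈ A`) when `p = ∞`. -/
noncomputable def lpIntOn {n : ℕ} (p : ℝ≥0∞) (A : Set (Fin n → ℝ))
    (g : (Fin n → ℝ) → ℝ≥0∞) : ℝ≥0∞ :=
  if p = ∞ then ⨆ x ∈ A, g x
  else (∫⁻ x in A, g x ^ p.toReal) ^ (1 / p.toReal)

/-- The Triebel–Lizorkin-type sequence norm
`‖t‖_{ḟ^{s,τ}_{p,q}} = sup_P |P|^{-τ} ( ∫_P ( Σ_{Q ⊆ P} [|Q|^{-s/n-1/2} |t_Q| χ_Q(x)]^q )^{p/q} dx )^{1/p}`,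
with the usual modifications when `p = ∞` or `q = ∞`. -/
noncomputable def fNorm (n : ℕ) (s τ : ℝ) (p q : ℝ≥0∞) (t : DyadicCube n → ℂ) : ℝ≥0∞ :=
  ⨆ P : DyadicCube n, P.vol ^ (-τ) *
    lpIntOn p P.toSet fun x =>
      lqSum q fun Q : {Q : DyadicCube n // Q.toSet ⊆ P.toSet} =>
        coeff s Q.1 * ‖t Q.1‖₊ * ind Q.1 x

/-- The Besov-type sequence norm
`‖t‖_{ḃ^{s,τ}_{p,q}} = sup_P |P|^{-τ} ( Σ_{j ≥ j_P} ( ∫_P [ Σ_{Q ⊆ P, ℓ(Q)=2^{-j}} |Q|^{-s/n-1/2} |t_Q| χ_Q(x) ]^p dx )^{q/p} )^{1/q}`,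
with the usual modifications when `p = ∞` or `q = ∞`. -/
noncomputable def bNorm (n : ℕ) (s τ : ℝ) (p q : ℝ≥0∞) (t : DyadicCube n → ℂ) : ℝ≥0∞ :=
  ⨆ P : DyadicCube n, P.vol ^ (-τ) *
    lqSum q fun j : {j : ℤ // P.j ≤ j} =>
      lpIntOn p P.toSet fun x =>
        ∑' Q : {Q : DyadicCube n // Q.toSet ⊆ P.toSet ∧ Q.j = j.1},
          coeff s Q.1 * ‖t Q.1‖₊ * ind Q.1 x

/-- The `ḟ^{σ}_{∞,∞} = ḃ^{σ}_{∞,∞}` sequence norm `sup_Q |Q|^{-σ/n - 1/2} |t_Q|`. -/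
noncomputable def supNorm (n : ℕ) (σ : ℝ) (t : DyadicCube n → ℂ) : ℝ≥0∞ :=
  ⨆ Q : DyadicCube n, coeff σ Q * ‖t Q‖₊

/-- The test sequence with `t_{R_j} = |R_j|^{s/n + 1/2 + τ - 1/p}` for
`R_j = [0,2^{-j})^n` (the dyadic cube with `k = 0`), and `t_Q = 0` otherwise. -/
noncomputable def testSeq (n : ℕ) (s τ p : ℝ) : DyadicCube n → ℂ := fun Q =>
  if Q.k = 0 then
    ((((2 : ℝ) ^ (-(Q.j : ℝ) * n)) ^ (s / n + 1 / 2 + τ - 1 / p) : ℝ) : ℂ)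
  else 0

/-- The cube `R_j = [0, 2^{-j})^n`. -/
def Rcube (n : ℕ) (j : ℤ) : DyadicCube n := ⟨j, 0⟩

/-! The test sequence lives on the cubes `R_j = [0, 2^{-j})^n` containing the origin, and inside
`R_m` its level-`j` part is the single bump `|R_j|^{τ - 1/p} χ_{R_j}` (for `j ≥ m`), whose `L^r`
norm is `|R_j|^{τ - 1/p + 1/r}`. For `r = p` the `ℓ^q` sum over `j ≥ m` is a geometric series
`≈ |R_m|^τ`, which the factor `|R_m|^{-τ}` cancels. For `r = q` and `τ ≤ 1/p - 1/q` the terms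
at `P = R_0` are all `≥ 1` (as `|R_j| ≤ 1` and `τ - 1/p + 1/q ≤ 0`), so the `ℓ^q` sum
diverges. -/

namespace DyadicCube

variable {n : ℕ}

lemma toSet_eq_pi (Q : DyadicCube n) :
    Q.toSet = Set.univ.pi fun i =>
      Set.Ico ((Q.k i : ℝ) * 2 ^ (-Q.j)) ((Q.k i + 1) * 2 ^ (-Q.j)) := by
  ext x
  simp [toSet, Set.mem_pi]

lemma measurableSet_toSet (Q : DyadicCube n) : MeasurableSet Q.toSet := by
  rw [toSet_eq_pi]
  exact MeasurableSet.univ_pi fun _ => measurableSet_Ico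

lemma volume_toSet (Q : DyadicCube n) : volume Q.toSet = Q.vol := by
  have hside : ENNReal.ofReal ((2 : ℝ) ^ (-Q.j)) = 2 ^ (-(Q.j : ℝ)) := by
    rw [← Real.rpow_intCast, ← ENNReal.ofReal_rpow_of_pos two_pos, ENNReal.ofReal_ofNat,
      Int.cast_neg]
  simp_rw [toSet_eq_pi, volume_pi_pi, Real.volume_Ico, ← sub_mul, add_sub_cancel_left, one_mul,
    hside, Finset.prod_const, Finset.card_univ, Fintype.card_fin, vol, ← ENNReal.rpow_natCast,
    ← ENNReal.rpow_mul]

lemma vol_ne_zero (Q : DyadicCube n) : Q.vol ≠ 0 := by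
  simp [vol]

lemma vol_ne_top (Q : DyadicCube n) : Q.vol ≠ ∞ := by
  simp [vol]

lemma k_eq_zero_of_zero_mem {Q : DyadicCube n} (h : 0 ∈ Q.toSet) : Q.k = 0 := by
  funext i
  obtain ⟨hlo, hhi⟩ := h i
  have hside : (0 : ℝ) < 2 ^ (-Q.j) := zpow_pos two_pos _
  have hle : Q.k i ≤ 0 := by exact_mod_cast nonpos_of_mul_nonpos_left hlo hside
  have hgt : 0 < Q.k i + 1 := by exact_mod_cast pos_of_mul_pos_left hhi hside.le
  simp only [Pi.zero_apply]
  omega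

end DyadicCube

section Rcube

variable {n : ℕ}

lemma eq_Rcube_of_k_eq_zero {Q : DyadicCube n} (h : Q.k = 0) : Q = Rcube n Q.j := by
  cases Q
  cases h
  rfl

lemma mem_Rcube_toSet {j : ℤ} {x : Fin n → ℝ} :
    x ∈ (Rcube n j).toSet ↔ ∀ i, 0 ≤ x i ∧ x i < 2 ^ (-j) := by
  simp [Rcube, DyadicCube.toSet]

lemma zero_mem_Rcube_toSet (j : ℤ) : (0 : Fin n → ℝ) ∈ (Rcube n j).toSet :=
  mem_Rcube_toSet.2 fun _ => ⟨le_rfl, zpow_pos two_pos _⟩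

lemma Rcube_toSet_subset {m j : ℤ} (h : m ≤ j) : (Rcube n j).toSet ⊆ (Rcube n m).toSet := by
  simp only [Set.subset_def, mem_Rcube_toSet]
  exact fun x hx i =>
    ⟨(hx i).1, (hx i).2.trans_le (zpow_le_zpow_right₀ one_le_two (by omega))⟩

lemma vol_Rcube_rpow (j : ℤ) (a : ℝ) :
    (Rcube n j).vol ^ a = (2 : ℝ≥0∞) ^ (-(j : ℝ) * (n * a)) := by
  rw [vol, ← ENNReal.rpow_mul, mul_assoc]
  rfl

end Rcube

lemma lqSum_ofReal {ι : Type*} {q : ℝ} (hq : 0 ≤ q) (a : ι → ℝ≥0∞) :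
    lqSum (ENNReal.ofReal q) a = (∑' i, a i ^ q) ^ (1 / q) := by
  rw [lqSum, if_neg ENNReal.ofReal_ne_top, ENNReal.toReal_ofReal hq]

lemma lqSum_eq_top_of_one_le {ι : Type*} [Infinite ι] {q : ℝ} (hq : 0 < q)
    {a : ι → ℝ≥0∞} (ha : ∀ i, 1 ≤ a i) : lqSum (ENNReal.ofReal q) a = ∞ := by
  have hsum : ∑' i, a i ^ q = ∞ := top_unique <|
    calc ∞ = ∑' _ : ι, (1 : ℝ≥0∞) :=
          (ENNReal.tsum_const_eq_top_of_ne_zero one_ne_zero).symm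
      _ ≤ ∑' i, a i ^ q := ENNReal.tsum_le_tsum fun i => ENNReal.one_le_rpow (ha i) hq
  rw [lqSum_ofReal hq.le, hsum, ENNReal.top_rpow_of_pos (by positivity)]

lemma lpIntOn_ofReal {n : ℕ} {p : ℝ} (hp : 0 ≤ p) (A : Set (Fin n → ℝ))
    (g : (Fin n → ℝ) → ℝ≥0∞) :
    lpIntOn (ENNReal.ofReal p) A g = (∫⁻ x in A, g x ^ p) ^ (1 / p) := by
  rw [lpIntOn, if_neg ENNReal.ofReal_ne_top, ENNReal.toReal_ofReal hp]

lemma lpIntOn_const_mul_ind {n : ℕ} {p : ℝ} (hp : 0 < p) {A : Set (Fin n → ℝ)}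
    {Q : DyadicCube n} (hQA : Q.toSet ⊆ A) (c : ℝ≥0∞) :
    lpIntOn (ENNReal.ofReal p) A (fun x => c * Q.ind x) = c * Q.vol ^ (1 / p) := by
  have hpow : (fun x => (c * Q.ind x) ^ p) = Q.toSet.indicator fun _ => c ^ p := by
    funext x
    by_cases hx : x ∈ Q.toSet <;> simp [ind, hx, ENNReal.zero_rpow_of_pos hp]
  rw [lpIntOn_ofReal hp.le, hpow, lintegral_indicator Q.measurableSet_toSet,
    Measure.restrict_restrict Q.measurableSet_toSet, Set.inter_eq_left.2 hQA, setLIntegral_const,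
    volume_toSet, ENNReal.mul_rpow_of_nonneg _ _ (by positivity), ← ENNReal.rpow_mul,
    mul_one_div_cancel hp.ne', ENNReal.rpow_one]

def natEquivIntGe (m : ℤ) : ℕ ≃ {j : ℤ // m ≤ j} where
  toFun i := ⟨m + i, by omega⟩
  invFun j := (j.1 - m).toNat
  left_inv i := by simp
  right_inv j := Subtype.ext (by have := j.2; simp; omega)

lemma tsum_two_rpow_neg_mul_intGe (m : ℤ) (c : ℝ) :
    ∑' j : {j : ℤ // m ≤ j}, (2 : ℝ≥0∞) ^ (-(j : ℝ) * c) =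
      2 ^ (-(m : ℝ) * c) * (1 - 2 ^ (-c))⁻¹ := by
  rw [← (natEquivIntGe m).tsum_eq, ← ENNReal.tsum_geometric, ← ENNReal.tsum_mul_left]
  congr 1
  funext i
  rw [← ENNReal.rpow_natCast, ← ENNReal.rpow_mul,
    ← ENNReal.rpow_add _ _ two_ne_zero ENNReal.ofNat_ne_top]
  simp only [natEquivIntGe, Equiv.coe_fn_mk, Int.cast_add, Int.cast_natCast]
  congr 1
  ring

noncomputable def levelSum {n : ℕ} (s : ℝ) (t : DyadicCube n → ℂ) (P : DyadicCube n)
    (j : ℤ) (x : Fin n → ℝ) : ℝ≥0∞ :=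
  ∑' Q : {Q : DyadicCube n // Q.toSet ⊆ P.toSet ∧ Q.j = j},
    coeff s Q.1 * ‖t Q.1‖₊ * Q.1.ind x

lemma bNorm_eq_iSup_levelSum (n : ℕ) (s τ : ℝ) (p q : ℝ≥0∞) (t : DyadicCube n → ℂ) :
    bNorm n s τ p q t = ⨆ P : DyadicCube n, P.vol ^ (-τ) *
      lqSum q fun j : {j : ℤ // P.j ≤ j} => lpIntOn p P.toSet (levelSum s t P j) :=
  rfl

section testSeq

variable {n : ℕ} {s τ p : ℝ}

lemma testSeq_of_k_ne_zero {Q : DyadicCube n} (hQ : Q.k ≠ 0) : testSeq n s τ p Q = 0 :=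
  if_neg hQ

lemma coeff_mul_nnnorm_testSeq {Q : DyadicCube n} (hQ : Q.k = 0) :
    coeff s Q * ‖testSeq n s τ p Q‖₊ = Q.vol ^ (τ - 1 / p) := by
  have hvol : Q.vol = ENNReal.ofReal ((2 : ℝ) ^ (-(Q.j : ℝ) * n)) := by
    rw [vol, ← ENNReal.ofReal_rpow_of_pos two_pos, ENNReal.ofReal_ofNat]
  have hnorm :
      (‖testSeq n s τ p Q‖₊ : ℝ≥0∞) = Q.vol ^ (s / n + 1 / 2 + τ - 1 / p) := by
    rw [testSeq, if_pos hQ, Complex.nnnorm_real, ← enorm_eq_nnnorm,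
      Real.enorm_eq_ofReal (by positivity), hvol, ENNReal.ofReal_rpow_of_pos (by positivity)]
  rw [coeff, hnorm, ← ENNReal.rpow_add _ _ Q.vol_ne_zero Q.vol_ne_top]
  congr 1
  ring

lemma levelSum_testSeq_of_k_ne_zero {P : DyadicCube n} (hP : P.k ≠ 0) (j : ℤ) :
    levelSum s (testSeq n s τ p) P j = 0 := by
  funext x
  refine ENNReal.tsum_eq_zero.2 fun ⟨Q, hQP, _⟩ => ?_
  have hQ : Q.k ≠ 0 := fun hQ => hP <| DyadicCube.k_eq_zero_of_zero_mem <|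
    hQP (eq_Rcube_of_k_eq_zero hQ ▸ zero_mem_Rcube_toSet Q.j)
  simp [testSeq_of_k_ne_zero hQ]

lemma levelSum_testSeq_Rcube {m j : ℤ} (hmj : m ≤ j) :
    levelSum s (testSeq n s τ p) (Rcube n m) j =
      fun x => (Rcube n j).vol ^ (τ - 1 / p) * (Rcube n j).ind x := by
  funext x
  rw [levelSum, tsum_eq_single ⟨Rcube n j, Rcube_toSet_subset hmj, rfl⟩]
  · rw [coeff_mul_nnnorm_testSeq rfl]
  · rintro ⟨Q, _, rfl⟩ hQ
    have hk : Q.k ≠ 0 := fun hk => hQ (Subtype.ext (eq_Rcube_of_k_eq_zero hk))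
    simp [testSeq_of_k_ne_zero hk]

lemma lpIntOn_levelSum_testSeq_Rcube {r : ℝ} (hr : 0 < r) {m j : ℤ} (hmj : m ≤ j) :
    lpIntOn (ENNReal.ofReal r) (Rcube n m).toSet (levelSum s (testSeq n s τ p) (Rcube n m) j) =
      (Rcube n j).vol ^ (τ - 1 / p + 1 / r) := by
  rw [levelSum_testSeq_Rcube hmj, lpIntOn_const_mul_ind hr (Rcube_toSet_subset hmj),
    ← ENNReal.rpow_add _ _ (DyadicCube.vol_ne_zero _) (DyadicCube.vol_ne_top _)]

lemma vol_rpow_neg_mul_lqSum_testSeq_Rcube {q : ℝ} (hp : 0 < p) (hq : 0 < q) (m : ℤ) :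
    (Rcube n m).vol ^ (-τ) * lqSum (ENNReal.ofReal q) (fun j : {j : ℤ // m ≤ j} =>
      lpIntOn (ENNReal.ofReal p) (Rcube n m).toSet (levelSum s (testSeq n s τ p) (Rcube n m) j)) =
      (1 - 2 ^ (-(n * τ * q)))⁻¹ ^ (1 / q) := by
  have hterm : ∀ j : {j : ℤ // m ≤ j}, lpIntOn (ENNReal.ofReal p) (Rcube n m).toSet
      (levelSum s (testSeq n s τ p) (Rcube n m) j) ^ q = 2 ^ (-(j : ℝ) * (n * τ * q)) := by
    intro j
    rw [lpIntOn_levelSum_testSeq_Rcube hp j.2, sub_add_cancel, ← ENNReal.rpow_mul,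
      vol_Rcube_rpow, mul_assoc]
  rw [lqSum_ofReal hq.le, tsum_congr hterm, tsum_two_rpow_neg_mul_intGe,
    ENNReal.mul_rpow_of_nonneg _ _ (by positivity), ← ENNReal.rpow_mul, ← mul_assoc,
    vol_Rcube_rpow, ← ENNReal.rpow_add _ _ two_ne_zero ENNReal.ofNat_ne_top]
  convert one_mul _
  convert ENNReal.rpow_zero
  field_simp
  ring

lemma bNorm_testSeq_le {q : ℝ} (hp : 0 < p) (hq : 0 < q) :
    bNorm n s τ (ENNReal.ofReal p) (ENNReal.ofReal q) (testSeq n s τ p) ≤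
      (1 - 2 ^ (-(n * τ * q)))⁻¹ ^ (1 / q) := by
  rw [bNorm_eq_iSup_levelSum]
  refine iSup_le fun P => ?_
  by_cases hP : P.k = 0
  · rw [eq_Rcube_of_k_eq_zero hP]
    exact (vol_rpow_neg_mul_lqSum_testSeq_Rcube hp hq P.j).le
  · simp_rw [levelSum_testSeq_of_k_ne_zero hP, lpIntOn_ofReal hp.le, lqSum_ofReal hq.le]
    simp [ENNReal.zero_rpow_of_pos, hp, hq]

lemma bNorm_testSeq_eq_top (σ : ℝ) {q r : ℝ} (hq : 0 < q) (hr : 0 < r)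
    (h : τ - 1 / p + 1 / r ≤ 0) :
    bNorm n s σ (ENNReal.ofReal r) (ENNReal.ofReal q) (testSeq n s τ p) = ∞ := by
  rw [bNorm_eq_iSup_levelSum]
  refine top_unique (le_iSup_of_le (Rcube n 0) ?_)
  have hvol : (Rcube n 0).vol ^ (-σ) = 1 := by simp [vol_Rcube_rpow]
  rw [hvol, one_mul]
  refine (lqSum_eq_top_of_one_le hq fun j => ?_).ge
  rw [lpIntOn_levelSum_testSeq_Rcube (m := 0) hr j.2, vol_Rcube_rpow, ← ENNReal.rpow_zero]
  have hj : (0 : ℝ) ≤ j := by exact_mod_cast j.2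
  exact ENNReal.rpow_le_rpow_of_exponent_le one_le_two <|
    mul_nonneg_of_nonpos_of_nonpos (neg_nonpos.2 hj)
      (mul_nonpos_of_nonneg_of_nonpos n.cast_nonneg h)

end testSeq

/-- for `s ∈ ℝ`, `p ∈ (0,∞)`, `q ∈ (p,∞)`, `τ ∈ (0, 1/p - 1/q]`, the test
sequence `t` (with `t_{R_j} = |R_j|^{s/n+1/2+τ-1/p}`, zero otherwise) has Besov-type
norm `‖t‖_{ḃ^{s,τ}_{p,q}}` bounded by a constant depending only on `n,p,q,τ`, while
`‖t‖_{ḃ^{s,τ+1/q-1/p}_{q,q}} = ∞`; hence `ḃ^{s,τ+1/q-1/p}_{q,q} ⊊ ḃ^{s,τ}_{p,q}`. -/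
theorem stmt5 (n : ℕ) (hn : 0 < n) (s p q τ : ℝ)
    (hp : 0 < p) (hpq : p < q) (hτ : 0 < τ) (hτ' : τ ≤ 1 / p - 1 / q) :
    (∃ C : ℝ≥0∞, C ≠ ∞ ∧
      bNorm n s τ (ENNReal.ofReal p) (ENNReal.ofReal q) (testSeq n s τ p) ≤ C) ∧
    bNorm n s (τ + 1 / q - 1 / p) (ENNReal.ofReal q) (ENNReal.ofReal q)
      (testSeq n s τ p) = ∞ := by
  have hq : 0 < q := hp.trans hpq
  refine ⟨⟨_, ?_, bNorm_testSeq_le hp hq⟩, bNorm_testSeq_eq_top _ hq hq (by linarith)⟩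
  have hratio : (2 : ℝ≥0∞) ^ (-(n * τ * q)) < 1 :=
    ENNReal.rpow_lt_one_of_one_lt_of_neg one_lt_two (neg_neg_of_pos (by positivity))
  exact ENNReal.rpow_ne_top_of_nonneg (by positivity)
    (ENNReal.inv_ne_top.2 (tsub_pos_of_lt hratio).ne')
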